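/- arXiv:1007.4845 — 9 statements merged into one kernel-verified Lean document; each statement's English description precedes it below -/
import Mathlib

section
/- Let X be a set, let x_1,...,x_k (k ≥ 2) be pairwise distinct elements of X, and let e_1,...,e_k be idempotents in T(X) such that e_i(x_i) = x_{i+1} for 1 ≤ i ≤ k, where x_{k+1} = x_1. Then there exists j ∈ {2,...,k} such that e_1 e_j ≠ e_j e_1. -/
/-!
If `e₁` commuted with every `e_j`, its fixed-point set would be invariant under every `e_j`.
It contains `x₂ = e₁ x₁` by idempotence, so following the cycle it also contains `x_{k+1} = x₁`,
contradicting `e₁ x₁ = x₂ ≠ x₁`.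
-/

open Function

section CycleOfIdempotents

variable {ι X : Type*} {σ : ι → ι} {x : ι → X} {e : ι → X → X}

theorem isFixedPt_iterate_of_commute (hstep : ∀ i, e i (x i) = x (σ i)) {f : X → X}
    (hcomm : ∀ i, Function.Commute (e i) f) {i : ι} (hi : IsFixedPt f (x i)) (n : ℕ) :
    IsFixedPt f (x (σ^[n] i)) := by
  induction n with
  | zero => exact hi
  | succ n ih =>
    rw [iterate_succ_apply', ← hstep]
    exact ih.map (hcomm _)

theorem exists_not_commute_of_cycle (hstep : ∀ i, e i (x i) = x (σ i)) {i₀ : ι}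
    (hidem : e i₀ ∘ e i₀ = e i₀) (hmove : x (σ i₀) ≠ x i₀) {n : ℕ}
    (hcycle : σ^[n] (σ i₀) = i₀) :
    ∃ j, j ≠ i₀ ∧ e i₀ ∘ e j ≠ e j ∘ e i₀ := by
  by_contra! h
  have hcomm (j : ι) : Function.Commute (e j) (e i₀) := by
    by_cases hj : j = i₀
    · exact hj ▸ Function.Commute.refl _
    · exact semiconj_iff_comp_eq.2 (h j hj).symm
  have hfirst : IsFixedPt (e i₀) (x (σ i₀)) := by
    rw [← hstep]
    exact congrFun hidem (x i₀)
  have hback := isFixedPt_iterate_of_commute hstep hcomm hfirst n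
  rw [hcycle] at hback
  exact hmove ((hstep i₀).symm.trans hback)

end CycleOfIdempotents

theorem Fin.val_iterate_add {k : ℕ} (a i : Fin k) (n : ℕ) :
    ((· + a)^[n] i).val = (i.val + n * a.val) % k := by
  induction n with
  | zero => simp [Nat.mod_eq_of_lt i.isLt]
  | succ n ih =>
    rw [iterate_succ_apply', Fin.val_add, ih, Nat.mod_add_mod, add_mul, one_mul, add_assoc]

theorem cycle_gives_noncommuting_idempotents {X : Type*} {k : ℕ} (hk : 2 ≤ k)
    (x : Fin k → X) (hx : Function.Injective x)
    (e : Fin k → (X → X)) (he : ∀ i, e i ∘ e i = e i)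
    (hstep : ∀ i : Fin k, e i (x i) = x (i + ⟨1, by omega⟩)) :
    ∃ j : Fin k, j ≠ ⟨0, by omega⟩ ∧
      e ⟨0, by omega⟩ ∘ e j ≠ e j ∘ e ⟨0, by omega⟩ := by
  refine exists_not_commute_of_cycle hstep (he _) (hx.ne ?_) (n := k - 1) ?_
  · simp [Fin.ext_iff, Fin.val_add, Nat.mod_eq_of_lt (by omega : 1 < k)]
  · ext
    rw [Fin.val_iterate_add]
    simp [Fin.val_add, Nat.mod_eq_of_lt (by omega : 1 < k), Nat.add_sub_cancel' (by omega : 1 ≤ k)]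
end

section
/- Let X be a finite set with at least 2 elements and let S be a subsemilattice of T(X) (a set of commuting idempotents closed under composition). Then there exist t, u ∈ X with u ≠ t such that for every e ∈ S, e(t) = t and e(u) ∈ {u, t}. -/
def IsSubsemilattice {X : Type*} (S : Set (X → X)) : Prop :=
  S.Nonempty ∧ (∀ e ∈ S, e ∘ e = e) ∧ (∀ e ∈ S, ∀ f ∈ S, e ∘ f = f ∘ e) ∧
    (∀ e ∈ S, ∀ f ∈ S, e ∘ f ∈ S)

theorem exists_fixed_pair {X : Type*} [Fintype X] (hX : 2 ≤ Fintype.card X)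
    (S : Set (X → X)) (hS : IsSubsemilattice S) :
    ∃ t u : X, u ≠ t ∧ ∀ e ∈ S, e t = t ∧ (e u = u ∨ e u = t) := by
  classical
  obtain ⟨hne, hid, hcomm, hcl⟩ := hS
  -- Step 1: a minimum element g of S: ∀ e ∈ S, e ∘ g = g
  have key : ∀ F : Finset (X → X), F.Nonempty → ↑F ⊆ S →
      ∃ g ∈ S, ∀ e ∈ F, e ∘ g = g := by
    intro F
    induction F using Finset.induction_on with
    | empty => intro h; exact absurd h (by simp)
    | @insert a F ha ih =>
      intro _ hsub
      have haS : a ∈ S := hsub (Finset.mem_insert_self a F)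
      by_cases hF : F.Nonempty
      · obtain ⟨g, hgS, hg⟩ := ih hF (fun x hx => hsub (Finset.mem_insert_of_mem hx))
        refine ⟨a ∘ g, hcl a haS g hgS, ?_⟩
        intro e he
        rcases Finset.mem_insert.mp he with rfl | he
        · rw [← Function.comp_assoc, hid e haS]
        · have heS : e ∈ S := hsub (Finset.mem_insert_of_mem he)
          rw [← Function.comp_assoc, hcomm e heS a haS, Function.comp_assoc, hg e he]
      · have : F = ∅ := Finset.not_nonempty_iff_eq_empty.mp hF
        subst this
        refine ⟨a, haS, ?_⟩
        intro e he
        rcases Finset.mem_insert.mp he with rfl | he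
        · exact hid e haS
        · simp at he
  obtain ⟨f₀, hf₀⟩ := hne
  have hSfin : S.Finite := Set.toFinite S
  obtain ⟨g, hgS, hg⟩ := key hSfin.toFinset ⟨f₀, hSfin.mem_toFinset.mpr hf₀⟩
    (fun x hx => hSfin.mem_toFinset.mp hx)
  have hg' : ∀ e ∈ S, e ∘ g = g := fun e he => hg e (hSfin.mem_toFinset.mpr he)
  -- t : a point in the range of g; fixed by every e ∈ S
  have hXne : Nonempty X := Fintype.card_pos_iff.mp (by omega)
  obtain ⟨x₀⟩ := hXne
  set t := g x₀ with ht
  have htfix : ∀ e ∈ S, e t = t := by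
    intro e he
    have := congrFun (hg' e he) x₀
    simpa using this
  -- order: r x y means x = y or x = e y for some e ∈ S
  set r : X → X → Prop := fun x y => x = y ∨ ∃ e ∈ S, e y = x with hr
  have rtrans : ∀ {x y z}, r x y → r y z → r x z := by
    rintro x y z (rfl | ⟨e, he, rfl⟩) hyz
    · exact hyz
    · rcases hyz with rfl | ⟨f, hf, rfl⟩
      · exact Or.inr ⟨e, he, rfl⟩
      · exact Or.inr ⟨e ∘ f, hcl e he f hf, rfl⟩
  have rantisymm : ∀ {x y}, r x y → r y x → x = y := by
    rintro x y (rfl | ⟨e, he, rfl⟩) hyx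
    · rfl
    · rcases hyx with h | ⟨f, hf, hfy⟩
      · exact h.symm
      · -- x = e y, y = f x ⇒ x = y
        have hcomm' := congrFun (hcomm e he f hf) (e y)
        simp only [Function.comp_apply] at hcomm'
        have hid' := congrFun (hid e he) y
        simp only [Function.comp_apply] at hid'
        calc e y = e (f (e y)) := by rw [hfy]
          _ = f (e (e y)) := hcomm'
          _ = f (e y) := by rw [hid']
          _ = y := hfy
  -- pick u ≠ t minimizing the downset size
  set d : X → ℕ := fun x => (Finset.univ.filter (fun v => r v x)).card with hd
  have hs : (Finset.univ.filter (fun x => x ≠ t)).Nonempty := by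
    obtain ⟨u, hu⟩ := Fintype.exists_ne_of_one_lt_card (by omega) t
    exact ⟨u, by simp [hu]⟩
  obtain ⟨u, hu, humin⟩ := Finset.exists_min_image _ d hs
  have hut : u ≠ t := by simpa using hu
  refine ⟨t, u, hut, fun e he => ⟨htfix e he, ?_⟩⟩
  by_contra hcon
  push_neg at hcon
  obtain ⟨h1, h2⟩ := hcon
  set v := e u with hv
  have hrvu : r v u := Or.inr ⟨e, he, rfl⟩
  have hsub : (Finset.univ.filter (fun w => r w v)) ⊂ (Finset.univ.filter (fun w => r w u)) := by
    constructor
    · intro w hw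
      simp only [Finset.mem_filter, Finset.mem_univ, true_and] at hw ⊢
      exact rtrans hw hrvu
    · intro hsub'
      have huu : u ∈ Finset.univ.filter (fun w => r w u) := by
        simp only [Finset.mem_filter, Finset.mem_univ, true_and]
        exact Or.inl rfl
      have := hsub' huu
      simp only [Finset.mem_filter, Finset.mem_univ, true_and] at this
      exact h1 (rantisymm hrvu this)
  have hlt : d v < d u := Finset.card_lt_card hsub
  have hge : d u ≤ d v := humin v (by simp [h2])
  omega
end

section
/- Fix t in a finite set X with |X| = n and let E_t = {e_A : A ⊆ X \ {t}} where e_A(x) = x for x ∈ A and e_A(x) = t otherwise. Then E_t is a maximal subsemilattice of T(X): for every idempotent f ∈ T(X) with f ∉ E_t, there exists e ∈ E_t such that e ∘ f ≠ f ∘ e. -/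
open scoped Classical

noncomputable def eFix {X : Type*} (t : X) (A : Set X) : X → X :=
  fun x => if x ∈ A then x else t

def Esl {X : Type*} (t : X) : Set (X → X) :=
  {e | ∃ A : Set X, A ⊆ {t}ᶜ ∧ e = @eFix X t A}

theorem Et_maximal {X : Type*} [Fintype X] (t : X)
    (f : X → X) (hf : f ∘ f = f) (hfE : f ∉ Esl t) :
    ∃ e ∈ Esl t, e ∘ f ≠ f ∘ e := by
  by_cases ht : f t = t
  · -- there must be some a with f a ∉ {a, t}
    by_cases hx : ∀ x, f x = x ∨ f x = t
    · exfalso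
      apply hfE
      refine ⟨{x | f x = x ∧ x ≠ t}, fun x hx' => hx'.2, ?_⟩
      funext x
      simp only [eFix, Set.mem_setOf_eq]
      split_ifs with h
      · exact h.1
      · push_neg at h
        rcases hx x with h1 | h1
        · by_cases hxt : x = t
          · rw [hxt, ht]
          · exact absurd (h h1) hxt
        · exact h1
    · push_neg at hx
      obtain ⟨a, ha1, ha2⟩ := hx
      have hat : a ≠ t := fun h => ha1 (h ▸ ht)
      refine ⟨eFix t {a}, ⟨{a}, by simpa [eq_comm] using hat, rfl⟩, ?_⟩
      intro h
      have := congrFun h a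
      simp only [Function.comp_apply, eFix, Set.mem_singleton_iff, if_pos rfl] at this
      rw [if_neg ha1] at this
      exact ha2 this.symm
  · refine ⟨eFix t ∅, ⟨∅, by simp, rfl⟩, ?_⟩
    intro h
    have := congrFun h t
    simp only [Function.comp_apply, eFix, Set.mem_empty_iff_false, if_false] at this
    exact ht this.symm
end

section
/- Let X be finite, S a subsemilattice of T(X), and t, u ∈ X with u ≠ t such that e(t) = t and e(u) ∈ {u, t} for all e ∈ S. For g ∈ S define g* ∈ T(X) by g*(x) = g(x) if g(x) ≠ u and g*(x) = t if g(x) = u. Then the map g ↦ g* is a semigroup homomorphism from S to T(X); in particular S* = {g* : g ∈ S} is a subsemilattice of T(X). -/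
open scoped Classical

noncomputable def star {X : Type*} (t u : X) (g : X → X) : X → X :=
  fun x => if g x = u then t else g x

/-- Where `h x = u`, both sides send `x` to `t`, since `g` fixes `t` and maps `u` into `{u, t}`. -/
theorem star_comp {X : Type*} {t u : X} {g : X → X} (ht : g t = t) (hu : g u = u ∨ g u = t)
    (h : X → X) : star t u (g ∘ h) = star t u g ∘ star t u h := by
  funext x
  by_cases hx : h x = u
  · rcases hu with hu | hu <;> simp [_root_.star, hx, hu, ht]
  · simp [_root_.star, hx]

theorem IsSubsemilattice.image {X Y : Type*} {S : Set (X → X)} (hS : IsSubsemilattice S)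
    (φ : (X → X) → Y → Y) (hφ : ∀ g ∈ S, ∀ h ∈ S, φ (g ∘ h) = φ g ∘ φ h) :
    IsSubsemilattice (φ '' S) := by
  obtain ⟨hne, hidem, hcomm, hclos⟩ := hS
  refine ⟨hne.image φ, ?_, ?_, ?_⟩
  · rintro _ ⟨g, hg, rfl⟩
    rw [← hφ g hg g hg, hidem g hg]
  · rintro _ ⟨g, hg, rfl⟩ _ ⟨h, hh, rfl⟩
    rw [← hφ g hg h hh, ← hφ h hh g hg, hcomm g hg h hh]
  · rintro _ ⟨g, hg, rfl⟩ _ ⟨h, hh, rfl⟩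
    exact ⟨g ∘ h, hclos g hg h hh, hφ g hg h hh⟩

theorem star_hom_and_semilattice_general {X : Type*}
    (S : Set (X → X)) (hS : IsSubsemilattice S)
    (t u : X)
    (ht : ∀ e ∈ S, e t = t) (hu : ∀ e ∈ S, e u = u ∨ e u = t) :
    (∀ g ∈ S, ∀ h ∈ S, star t u (g ∘ h) = star t u g ∘ star t u h) ∧
    IsSubsemilattice (star t u '' S) := by
  have hom : ∀ g ∈ S, ∀ h ∈ S, star t u (g ∘ h) = star t u g ∘ star t u h :=
    fun g hg h _ => star_comp (ht g hg) (hu g hg) h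
  exact ⟨hom, hS.image (star t u) hom⟩

theorem star_hom_and_semilattice {X : Type*} [Fintype X]
    (S : Set (X → X)) (hS : IsSubsemilattice S)
    (t u : X) (hut : u ≠ t)
    (ht : ∀ e ∈ S, e t = t) (hu : ∀ e ∈ S, e u = u ∨ e u = t) :
    (∀ g ∈ S, ∀ h ∈ S, star t u (g ∘ h) = star t u g ∘ star t u h) ∧
    IsSubsemilattice (star t u '' S) :=
  star_hom_and_semilattice_general S hS t u ht hu
end

section
/- Let X be finite, S a subsemilattice of T(X), and t, u ∈ X with u ≠ t such that e(t) = t and e(u) ∈ {u, t} for all e ∈ S. Define g* by g*(x) = g(x) if g(x) ≠ u and g*(x) = t otherwise. If g, h ∈ S are distinct and both u ∈ image(g) and u ∈ image(h), then g* ≠ h*. -/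
open scoped Classical

theorem star_injective_on_u_hitters {X : Type*} [Fintype X]
    (S : Set (X → X)) (hS : IsSubsemilattice S)
    (t u : X) (hut : u ≠ t)
    (ht : ∀ e ∈ S, e t = t) (hu : ∀ e ∈ S, e u = u ∨ e u = t)
    (g h : X → X) (hg : g ∈ S) (hh : h ∈ S) (hne : g ≠ h)
    (hgu : u ∈ Set.range g) (hhu : u ∈ Set.range h) :
    star t u g ≠ star t u h := by
  obtain ⟨_, hidem, hcomm, _⟩ := hS
  have hguu : g u = u := by
    obtain ⟨y, hy⟩ := hgu
    calc g u = g (g y) := by rw [hy]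
    _ = g y := congrFun (hidem g hg) y
    _ = u := hy
  have hhuu : h u = u := by
    obtain ⟨y, hy⟩ := hhu
    calc h u = h (h y) := by rw [hy]
    _ = h y := congrFun (hidem h hh) y
    _ = u := hy
  intro heq
  apply hne
  funext x
  have hx : (if g x = u then t else g x) = (if h x = u then t else h x) :=
    congrFun heq x
  by_cases hgx : g x = u <;> by_cases hhx : h x = u
  · rw [hgx, hhx]
  · rw [if_pos hgx, if_neg hhx] at hx
    have hc := congrFun (hcomm g hg h hh) x
    simp only [Function.comp] at hc
    rw [← hx, ht g hg, hgx, hhuu] at hc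
    exact absurd hc.symm hut
  · rw [if_neg hgx, if_pos hhx] at hx
    have hc := congrFun (hcomm g hg h hh) x
    simp only [Function.comp] at hc
    rw [hx, ht h hh, hhx, hguu] at hc
    exact absurd hc hut
  · rwa [if_neg hgx, if_neg hhx] at hx
end

section
/- Let X be finite, S a subsemilattice of T(X), and t, u ∈ X with u ≠ t such that e(t) = t and e(u) ∈ {u, t} for all e ∈ S. Let S* = {g* : g ∈ S} where g*(x) = g(x) if g(x) ≠ u and g*(x) = t otherwise. Then |S| ≤ 2|S*|. -/
/-!
Split `S` according to whether `g u = u`. On the elements fixing `u`, `g ↦ g*` is injective: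
if `g x = u ≠ h x` and `g* = h*`, then `h x = t`, so `g (h x) = t` while `h (g x) = u`,
contradicting `g ∘ h = h ∘ g`. On the remaining elements, idempotence keeps `u` out of the range
of `g`, so `g* = g`. Each half therefore has at most `|S*|` elements.
-/

open scoped Classical

theorem Set.ncard_le_two_mul_ncard_image_of_injOn {α β : Type*} {f : α → β} {s A : Set α}
    (hA : InjOn f (s ∩ A)) (hAc : InjOn f (s \ A)) : s.ncard ≤ 2 * (f '' s).ncard := by
  rcases s.finite_or_infinite with hs | hs
  · have hA_le : (s ∩ A).ncard ≤ (f '' s).ncard := hA.ncard_image.symm.le.trans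
      (ncard_le_ncard (image_mono inter_subset_left) (hs.image f))
    have hAc_le : (s \ A).ncard ≤ (f '' s).ncard := hAc.ncard_image.symm.le.trans
      (ncard_le_ncard (image_mono sdiff_subset) (hs.image f))
    rw [← ncard_inter_add_ncard_sdiff_eq_ncard s A hs]
    omega
  · simp [hs.ncard]

section Star

variable {X : Type*} {t u : X} {g h : X → X}

theorem star_eq_self (hg : ∀ x, g x ≠ u) : star t u g = g :=
  funext fun x => if_neg (hg x)

theorem apply_ne_of_idempotent (hg : g ∘ g = g) (hgu : g u ≠ u) (x : X) : g x ≠ u := by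
  intro hx
  have hggx : g (g x) = g x := congrFun hg x
  rw [hx] at hggx
  exact hgu hggx

theorem apply_eq_of_star_apply_eq {x : X} (hut : u ≠ t) (hcomm : g (h x) = h (g x))
    (hgu : g u = u) (hht : h t = t) (heq : star t u g x = star t u h x) (hhx : h x = u) :
    g x = u := by
  by_contra hgx
  have hgxt : g x = t := by simpa [_root_.star, hgx, hhx] using heq
  rw [hhx, hgu, hgxt, hht] at hcomm
  exact hut hcomm

theorem eq_of_star_eq (hut : u ≠ t) (hcomm : g ∘ h = h ∘ g) (hgt : g t = t) (hht : h t = t)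
    (hgu : g u = u) (hhu : h u = u) (heq : star t u g = star t u h) : g = h := by
  funext x
  have hx : star t u g x = star t u h x := congrFun heq x
  by_cases hgx : g x = u
  · rw [hgx, apply_eq_of_star_apply_eq hut (congrFun hcomm x).symm hhu hgt hx.symm hgx]
  · have hhx : h x ≠ u := fun hhx =>
      hgx (apply_eq_of_star_apply_eq hut (congrFun hcomm x) hgu hht hx hhx)
    simpa [_root_.star, hgx, hhx] using hx

end Star

theorem card_le_two_mul_card_star_general {X : Type*}
    (S : Set (X → X)) (hS : IsSubsemilattice S)
    (t u : X) (hut : u ≠ t)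
    (ht : ∀ e ∈ S, e t = t) :
    S.ncard ≤ 2 * (star t u '' S).ncard := by
  obtain ⟨-, hidem, hcomm, -⟩ := hS
  refine Set.ncard_le_two_mul_ncard_image_of_injOn (A := {g | g u = u}) ?_ ?_
  · rintro g ⟨hg, hgu⟩ h ⟨hh, hhu⟩ heq
    exact eq_of_star_eq hut (hcomm g hg h hh) (ht g hg) (ht h hh) hgu hhu heq
  · have hfix : Set.EqOn id (star t u) (S \ {g | g u = u}) := fun g ⟨hg, hgu⟩ =>
      (star_eq_self (apply_ne_of_idempotent (hidem g hg) hgu)).symm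
    exact Set.injOn_id _ |>.congr hfix

theorem card_le_two_mul_card_star {X : Type*} [Fintype X]
    (S : Set (X → X)) (hS : IsSubsemilattice S)
    (t u : X) (hut : u ≠ t)
    (ht : ∀ e ∈ S, e t = t) (hu : ∀ e ∈ S, e u = u ∨ e u = t) :
    S.ncard ≤ 2 * (star t u '' S).ncard :=
  card_le_two_mul_card_star_general S hS t u hut ht
end

section
/- Let X be finite, S a subsemilattice of T(X), and t, u ∈ X with u ≠ t such that e(t) = t and e(u) ∈ {u, t} for all e ∈ S. Let S* = {g* : g ∈ S} with g*(x) = g(x) if g(x) ≠ u and g*(x) = t otherwise. Then no element of S* takes the value u, and the restriction map e ↦ e|_{X \ {u}} is an injective semigroup homomorphism from S* into T(X \ {u}); hence S* embeds as a subsemilattice of T(X \ {u}). -/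
open scoped Classical

lemma star_apply' {X : Type*} (t u : X) (g : X → X) (x : X) :
    star t u g x = if g x = u then t else g x := rfl

theorem star_embeds_in_smaller {X : Type*} [Fintype X]
    (S : Set (X → X)) (hS : IsSubsemilattice S)
    (t u : X) (hut : u ≠ t)
    (ht : ∀ e ∈ S, e t = t) (hu : ∀ e ∈ S, e u = u ∨ e u = t) :
    (∀ a ∈ star t u '' S, ∀ x : X, a x ≠ u) ∧
    ∃ ρ : (X → X) → ({x : X // x ≠ u} → {x : X // x ≠ u}),
      (∀ a ∈ star t u '' S, ∀ x : {x : X // x ≠ u}, ((ρ a) x : X) = a x) ∧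
      Set.InjOn ρ (star t u '' S) ∧
      (∀ a ∈ star t u '' S, ∀ b ∈ star t u '' S, ρ (a ∘ b) = ρ a ∘ ρ b) := by
  have hne : ∀ a ∈ star t u '' S, ∀ x : X, a x ≠ u := by
    rintro a ⟨g, hg, rfl⟩ x
    simp only [star_apply']
    split
    · exact hut.symm
    · assumption
  have hau : ∀ a ∈ star t u '' S, a u = t := by
    rintro a ⟨g, hg, rfl⟩
    simp only [star_apply']
    rcases hu g hg with h | h <;> simp [h, hut.symm]
  refine ⟨hne, fun a => fun x => ⟨star t u a x, by
      rw [star_apply']; split_ifs with h; exacts [hut.symm, h]⟩, ?_, ?_, ?_⟩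
  · rintro a ha ⟨x, hx⟩
    simp only [star_apply']
    rw [if_neg (hne a ha x)]
  · rintro a ha b hb hab
    funext x
    by_cases hx : x = u
    · rw [hx, hau a ha, hau b hb]
    · have := congrFun hab ⟨x, hx⟩
      simpa [star_apply', if_neg (hne a ha x), if_neg (hne b hb x), Subtype.ext_iff] using this
  · intro a ha b hb
    funext x
    apply Subtype.ext
    simp only [Function.comp, star_apply', if_neg (hne b hb x.1), if_neg (hne a ha (b x.1)),
      if_neg (hne a ha _)]
end

section
/- Let X be a finite set with n ≥ 2 elements, S a subsemilattice of T(X), and t, u ∈ X with u ≠ t such that for every e ∈ S, e(t) = t and e(u) ∈ {u, t}. Suppose |e^{-1}(x)| ≤ 1 for all e ∈ S and all x ∈ X \ {u, t}, and suppose |f^{-1}(u)| ≥ 2 for some f ∈ S. Then |S| < 2^{n-1}. -/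
open Function

theorem Set.ncard_lt_two_pow_of_injOn {α β : Type*} [DecidableEq β] {S : Set α}
    {A B : Finset β} (ψ : α → Finset β) (hinj : S.InjOn ψ) (hsub : ∀ a ∈ S, ψ a ⊆ A)
    (hB : B ⊆ A) (hne : ∀ a ∈ S, ψ a ≠ B) : S.ncard < 2 ^ A.card := by
  have hB' : B ∈ A.powerset := Finset.mem_powerset.2 hB
  calc S.ncard ≤ (↑(A.powerset.erase B) : Set (Finset β)).ncard :=
        Set.ncard_le_ncard_of_injOn ψ
          (fun a ha => Finset.mem_erase.2 ⟨hne a ha, Finset.mem_powerset.2 (hsub a ha)⟩) hinj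
    _ = 2 ^ A.card - 1 := by
        rw [Set.ncard_coe_finset, Finset.card_erase_of_mem hB', Finset.card_powerset]
    _ < 2 ^ A.card := Nat.sub_lt (Nat.two_pow_pos _) one_pos

theorem one_lt_ncard_preimage_apply_of_apply_ne {X : Type*} [Finite X] {e : X → X} {x : X}
    (hidem : e (e x) = e x) (hx : e x ≠ x) : 1 < (e ⁻¹' {e x}).ncard :=
  (Set.one_lt_ncard_iff (Set.toFinite _)).2 ⟨x, e x, rfl, hidem, hx.symm⟩

namespace IsSubsemilattice

variable {X : Type*} {S : Set (X → X)}

theorem apply_apply_self (hS : IsSubsemilattice S) {e : X → X} (he : e ∈ S) (x : X) :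
    e (e x) = e x :=
  congrFun (hS.2.1 e he) x

theorem apply_comm (hS : IsSubsemilattice S) {e g : X → X} (he : e ∈ S) (hg : g ∈ S) (x : X) :
    e (g x) = g (e x) :=
  congrFun (hS.2.2.1 e he g hg) x

variable [Finite X] {t u : X}

theorem apply_eq_or_of_apply_ne (hS : IsSubsemilattice S)
    (hsmall : ∀ e ∈ S, ∀ x : X, x ≠ u → x ≠ t → (e ⁻¹' {x}).ncard ≤ 1)
    {e : X → X} (he : e ∈ S) {x : X} (hx : e x ≠ x) : e x = u ∨ e x = t := by
  by_contra! h
  have := one_lt_ncard_preimage_apply_of_apply_ne (hS.apply_apply_self he x) hx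
  exact this.not_ge (hsmall e he (e x) h.1 h.2)

theorem eq_of_fixedPoints_eq (hS : IsSubsemilattice S) (ht : ∀ e ∈ S, e t = t)
    (hsmall : ∀ e ∈ S, ∀ x : X, x ≠ u → x ≠ t → (e ⁻¹' {x}).ncard ≤ 1)
    {e g : X → X} (he : e ∈ S) (hg : g ∈ S) (hfix : fixedPoints e = fixedPoints g) :
    e = g := by
  have collapse : ∀ e ∈ S, ∀ g ∈ S, fixedPoints e = fixedPoints g →
      ∀ x, e x = u → g x = t → u = t := by
    intro e he g hg hfix x hex hgx
    have hgu : IsFixedPt g u := by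
      rw [← mem_fixedPoints, ← hfix, mem_fixedPoints, IsFixedPt, ← hex]
      exact hS.apply_apply_self he x
    calc u = g (e x) := by rw [hex, hgu]
      _ = e (g x) := (hS.apply_comm he hg x).symm
      _ = t := by rw [hgx, ht e he]
  funext x
  by_cases hex : IsFixedPt e x
  · have hgx : IsFixedPt g x := show x ∈ fixedPoints g from hfix ▸ hex
    rw [hex, hgx]
  · have hgx : ¬IsFixedPt g x := show x ∉ fixedPoints g from hfix ▸ hex
    rcases hS.apply_eq_or_of_apply_ne hsmall he hex with h₁ | h₁ <;>
      rcases hS.apply_eq_or_of_apply_ne hsmall hg hgx with h₂ | h₂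
    · rw [h₁, h₂]
    · rw [h₁, h₂, collapse e he g hg hfix x h₁ h₂]
    · rw [h₁, h₂, collapse g hg e he hfix.symm x h₂ h₁]
    · rw [h₁, h₂]

end IsSubsemilattice

theorem card_lt_of_collapse_only_at_u_general {X : Type*} [Fintype X] {n : ℕ}
    (hn : Fintype.card X = n)
    (S : Set (X → X)) (hS : IsSubsemilattice S)
    (t u : X) (hut : u ≠ t)
    (ht : ∀ e ∈ S, e t = t)
    (hsmall : ∀ e ∈ S, ∀ x : X, x ≠ u → x ≠ t → (e ⁻¹' {x}).ncard ≤ 1)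
    (hbig : ∃ f ∈ S, 2 ≤ (f ⁻¹' {u}).ncard) :
    S.ncard < 2 ^ (n - 1) := by
  classical
  obtain ⟨f, hf, hfu⟩ := hbig
  obtain ⟨y, hfy, hyu⟩ := Set.exists_ne_of_one_lt_ncard hfu u
  have hyt : y ≠ t := fun h => hut (by rw [← hfy, h, ht f hf])
  let ψ : (X → X) → Finset X := fun e => (Finset.univ.filter fun x => e x = x).erase t
  have mem_ψ : ∀ e x, x ∈ ψ e ↔ x ≠ t ∧ IsFixedPt e x := by simp [ψ, IsFixedPt]
  rw [← hn, ← Finset.card_univ, ← Finset.card_erase_of_mem (Finset.mem_univ t)]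
  refine Set.ncard_lt_two_pow_of_injOn (B := {y}) ψ ?_ ?_ (by simpa using hyt) ?_
  · intro e he g hg hψ
    refine hS.eq_of_fixedPoints_eq ht hsmall he hg (Set.ext fun x => ?_)
    by_cases hx : x = t
    · simp only [hx, mem_fixedPoints, IsFixedPt, ht e he, ht g hg]
    · have fixed_iff : ∀ e, IsFixedPt e x ↔ x ∈ ψ e := fun e => by simp [mem_ψ, hx]
      rw [mem_fixedPoints, mem_fixedPoints, fixed_iff, fixed_iff, hψ]
  · intro e _ x hx
    simpa using ((mem_ψ e x).1 hx).1
  · intro e he hψ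
    have hey : e y = y := ((mem_ψ e y).1 (hψ ▸ Finset.mem_singleton_self y)).2
    have hu : u ∈ ψ e := (mem_ψ e u).2 ⟨hut, by rw [IsFixedPt, ← hfy, hS.apply_comm he hf, hey]⟩
    exact hyu (Finset.mem_singleton.1 (hψ ▸ hu)).symm

theorem card_lt_of_collapse_only_at_u {X : Type*} [Fintype X] {n : ℕ}
    (hn : Fintype.card X = n) (hn2 : 2 ≤ n)
    (S : Set (X → X)) (hS : IsSubsemilattice S)
    (t u : X) (hut : u ≠ t)
    (ht : ∀ e ∈ S, e t = t) (hu : ∀ e ∈ S, e u = u ∨ e u = t)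
    (hsmall : ∀ e ∈ S, ∀ x : X, x ≠ u → x ≠ t → (e ⁻¹' {x}).ncard ≤ 1)
    (hbig : ∃ f ∈ S, 2 ≤ (f ⁻¹' {u}).ncard) :
    S.ncard < 2 ^ (n - 1) :=
  card_lt_of_collapse_only_at_u_general hn S hS t u hut ht hsmall hbig
end

section
/- Let X be a finite set with n ≥ 1 elements. There are exactly n subsemilattices of T(X) of cardinality 2^{n-1}, namely the semilattices E_t for t ∈ X, where E_t = {e_A : A ⊆ X \ {t}} and e_A fixes A pointwise and maps all other points to t. -/
open scoped Classical

section Aux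

variable {X : Type*}

lemma eFix_comp (t : X) (A B : Set X) :
    eFix t A ∘ eFix t B = eFix t (A ∩ B) := by
  funext x
  by_cases hB : x ∈ B
  · by_cases hA : x ∈ A <;> simp [eFix, Function.comp, hA, hB]
  · simp [eFix, Function.comp, hB]

lemma esl_subsemilattice (t : X) : IsSubsemilattice (Esl t) := by
  refine ⟨⟨eFix t ∅, ∅, by simp, rfl⟩, ?_, ?_, ?_⟩
  · rintro e ⟨A, hA, rfl⟩
    rw [eFix_comp, Set.inter_self]
  · rintro e ⟨A, hA, rfl⟩ f ⟨B, hB, rfl⟩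
    rw [eFix_comp, eFix_comp, Set.inter_comm]
  · rintro e ⟨A, hA, rfl⟩ f ⟨B, hB, rfl⟩
    exact ⟨A ∩ B, Set.inter_subset_left.trans hA, eFix_comp t A B⟩

lemma eFix_subset_of_eq {t : X} {A B : Set X} (hA : A ⊆ {t}ᶜ)
    (h : eFix t A = eFix t B) : A ⊆ B := by
  intro x hx
  have hxt : x ≠ t := hA hx
  have h2 := congrFun h x
  simp only [eFix, if_pos hx] at h2
  by_contra hxB
  rw [if_neg hxB] at h2
  exact hxt h2

lemma eFix_injOn (t : X) : Set.InjOn (eFix t) {A : Set X | A ⊆ {t}ᶜ} := by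
  intro A hA B hB h
  exact le_antisymm (eFix_subset_of_eq hA h) (eFix_subset_of_eq hB h.symm)

noncomputable def powersetEquiv (t : X) :
    {A : Set X // A ⊆ {t}ᶜ} ≃ Set {x : X // x ≠ t} where
  toFun A := {x | (x : X) ∈ A.1}
  invFun B := ⟨{x | ∃ h : x ≠ t, (⟨x, h⟩ : {x : X // x ≠ t}) ∈ B},
    fun x hx => hx.1⟩
  left_inv A := by
    apply Subtype.ext
    ext x
    constructor
    · rintro ⟨h, hx⟩; exact hx
    · intro hx; exact ⟨A.2 hx, hx⟩
  right_inv B := by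
    ext ⟨x, hx⟩
    constructor
    · rintro ⟨h, hmem⟩; exact hmem
    · intro hmem; exact ⟨hx, hmem⟩

lemma ncard_powerset [Fintype X] (t : X) :
    {A : Set X | A ⊆ {t}ᶜ}.ncard = 2 ^ (Fintype.card X - 1) := by
  rw [← Nat.card_coe_set_eq]
  have h1 : Nat.card {A : Set X // A ⊆ {t}ᶜ} = Nat.card (Set {x : X // x ≠ t}) :=
    Nat.card_congr (powersetEquiv t)
  have h2 : Fintype.card {x : X // x ≠ t} = Fintype.card X - 1 := by
    have e : {x : X // x ≠ t} ≃ {x : X // ¬ x = t} := Equiv.subtypeEquivRight (fun _ => Iff.rfl)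
    rw [Fintype.card_congr e, Fintype.card_subtype_compl, Fintype.card_subtype_eq]
  have h3 : Nat.card (Set {x : X // x ≠ t}) = 2 ^ (Fintype.card X - 1) := by
    rw [Nat.card_eq_fintype_card, Fintype.card_set, h2]
  exact h1.trans h3

lemma esl_eq_image (t : X) : Esl t = eFix t '' {A : Set X | A ⊆ {t}ᶜ} := by
  ext e
  constructor
  · rintro ⟨A, hA, rfl⟩; exact ⟨A, hA, rfl⟩
  · rintro ⟨A, hA, rfl⟩; exact ⟨A, hA, rfl⟩

lemma esl_ncard [Fintype X] (t : X) :
    (Esl t).ncard = 2 ^ (Fintype.card X - 1) := by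
  rw [esl_eq_image, Set.ncard_image_of_injOn (eFix_injOn t), ncard_powerset t]

lemma hard_direction [Fintype X] (S : Set (X → X)) (hS : IsSubsemilattice S)
    (hcard : S.ncard = 2 ^ (Fintype.card X - 1)) (hn1 : 1 ≤ Fintype.card X) :
    ∃ t : X, S = Esl t := by
  obtain ⟨hne, hidem, hcomm, hclosed⟩ := hS
  have hne' : Nonempty X := Fintype.card_pos_iff.mp (by omega)
  set fx : (X → X) → Set X := fun e => {x | e x = x} with hfx
  have hidem' : ∀ e ∈ S, ∀ x, e (e x) = e x := fun e he x => congrFun (hidem e he) x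
  have hrange : ∀ e ∈ S, ∀ x, e x ∈ fx e := fun e he x => hidem' e he x
  have hfixcomp : ∀ e ∈ S, ∀ f ∈ S, fx (e ∘ f) = fx e ∩ fx f := by
    intro e he f hf
    ext x
    constructor
    · intro hx
      have hx' : e (f x) = x := hx
      have he1 : e x = x := by
        have h0 := hidem' e he (f x)
        rw [hx'] at h0
        exact h0
      have hf1 : f x = x := by
        have h3 : f (e (f x)) = f x := congrArg f hx'
        have h4 : f (e (f x)) = e (f (f x)) := congrFun (hcomm f hf e he) (f x)
        have h5 : f (f x) = f x := hidem' f hf x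
        rw [h4, h5, hx'] at h3
        exact h3.symm
      exact ⟨he1, hf1⟩
    · rintro ⟨h1, h2⟩
      show e (f x) = x
      rw [show f x = x from h2, h1]
  have hfixinj : ∀ e ∈ S, ∀ f ∈ S, fx e = fx f → e = f := by
    intro e he f hf h
    have h1 : e ∘ f = f := by
      funext x
      have h0 : f x ∈ fx f := hrange f hf x
      rw [← h] at h0
      exact h0
    have h2 : f ∘ e = e := by
      funext x
      have h0 : e x ∈ fx e := hrange e he x
      rw [h] at h0
      exact h0
    calc e = f ∘ e := h2.symm
      _ = e ∘ f := (hcomm e he f hf).symm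
      _ = f := h1
  -- minimal element
  obtain ⟨m, hm, hmmin⟩ := Set.exists_min_image S (fun e => (fx e).ncard) S.toFinite hne
  have hmle : ∀ e ∈ S, fx m ⊆ fx e := by
    intro e he
    have h1 : e ∘ m ∈ S := hclosed e he m hm
    have h2 : fx (e ∘ m) = fx e ∩ fx m := hfixcomp e he m hm
    have h3 : (fx m).ncard ≤ (fx e ∩ fx m).ncard := by
      have := hmmin _ h1
      rwa [h2] at this
    have h4 : fx e ∩ fx m = fx m :=
      Set.eq_of_subset_of_ncard_le Set.inter_subset_right h3
    intro x hx
    have : x ∈ fx e ∩ fx m := h4.symm ▸ hx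
    exact this.1
  obtain ⟨x0⟩ := hne'
  set t := m x0 with htdef
  have ht0 : t ∈ fx m := hrange m hm x0
  have htfix : ∀ e ∈ S, e t = t := fun e he => hmle e he ht0
  -- the bijection with subsets of X \ {t}
  set Y := {x : X // x ≠ t}
  let φ : ↥S → Set Y := fun e => {x : Y | (e : X → X) (x : X) = (x : X)}
  have hφinj : Function.Injective φ := by
    intro e f h
    apply Subtype.ext
    apply hfixinj e.1 e.2 f.1 f.2
    ext x
    by_cases hx : x = t
    · subst hx
      simp only [hfx, Set.mem_setOf_eq, htfix e.1 e.2, htfix f.1 f.2]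
    · have h0 := Set.ext_iff.mp h ⟨x, hx⟩
      simpa [φ, hfx] using h0
  have hcards : Nat.card ↥S = Nat.card (Set Y) := by
    have h2 : Fintype.card Y = Fintype.card X - 1 := by
      have e : Y ≃ {x : X // ¬ x = t} := Equiv.subtypeEquivRight (fun _ => Iff.rfl)
      rw [Fintype.card_congr e, Fintype.card_subtype_compl, Fintype.card_subtype_eq]
    rw [Nat.card_coe_set_eq, hcard, Nat.card_eq_fintype_card, Fintype.card_set, h2]
  have hφbij : Function.Bijective φ :=
    (Nat.bijective_iff_injective_and_card φ).mpr ⟨hφinj, hcards⟩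
  -- key: e maps non-fixed points to t
  have hkey : ∀ e ∈ S, ∀ x, e x ≠ x → e x = t := by
    intro e he x hx
    have hxt : x ≠ t := fun h => hx (by rw [h]; exact htfix e he)
    obtain ⟨f, hf⟩ := hφbij.2 ({⟨x, hxt⟩} : Set Y)
    have hfx' : (f : X → X) x = x := by
      have h0 : (⟨x, hxt⟩ : Y) ∈ φ f := by rw [hf]; exact rfl
      exact h0
    have hg : e ∘ (f : X → X) ∈ S := hclosed e he f.1 f.2
    have hgfix : ∀ y, (e ∘ (f : X → X)) y = t := by
      intro y
      have h1 : (e ∘ (f : X → X)) y ∈ fx (e ∘ (f : X → X)) := hrange _ hg y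
      rw [hfixcomp e he f.1 f.2] at h1
      obtain ⟨h2, h3⟩ := h1
      by_cases hzt : (e ∘ (f : X → X)) y = t
      · exact hzt
      · exfalso
        have hmem : (⟨(e ∘ (f : X → X)) y, hzt⟩ : Y) ∈ φ f := h3
        rw [hf] at hmem
        have hzx : (e ∘ (f : X → X)) y = x := congrArg Subtype.val hmem
        apply hx
        rw [← hzx]
        exact h2
    have h4 := hgfix x
    have h5 : (e ∘ (f : X → X)) x = e x := by
      simp [Function.comp, hfx']
    rw [h5] at h4
    exact h4
  -- S ⊆ Esl t
  have hsub : S ⊆ Esl t := by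
    intro e he
    refine ⟨{x | e x = x ∧ x ≠ t}, fun x hx => hx.2, ?_⟩
    funext x
    by_cases h1 : e x = x
    · by_cases h2 : x = t
      · subst h2
        simp only [eFix, Set.mem_setOf_eq, ne_eq, not_true_eq_false, and_false,
          if_false]
        exact h1
      · simp [eFix, h1, h2]
    · have h3 := hkey e he x h1
      have h4 : x ∉ {x | e x = x ∧ x ≠ t} := fun hc => h1 hc.1
      simp only [eFix]
      rw [if_neg h4]
      exact h3
  refine ⟨t, Set.eq_of_subset_of_ncard_le hsub ?_⟩
  rw [esl_ncard t, hcard]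

lemma esl_injective [Fintype X] (hX : Nonempty X) :
    Function.Injective (Esl : X → Set (X → X)) := by
  intro t t' h
  have hmem : (fun _ : X => t) ∈ Esl t := ⟨∅, by simp, by funext x; simp [eFix]⟩
  rw [h] at hmem
  obtain ⟨A, hA, hAe⟩ := hmem
  have h0 := congrFun hAe t'
  simpa [eFix] using h0

end Aux

theorem max_semilattices_are_Et {X : Type*} [Fintype X] {n : ℕ}
    (hn : Fintype.card X = n) (hn1 : 1 ≤ n) :
    {S : Set (X → X) | IsSubsemilattice S ∧ S.ncard = 2 ^ (n - 1)} =
      {S : Set (X → X) | ∃ t : X, S = Esl t} ∧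
    Nat.card {S : Set (X → X) | IsSubsemilattice S ∧ S.ncard = 2 ^ (n - 1)} = n := by
  subst hn
  have hX : Nonempty X := Fintype.card_pos_iff.mp (by omega)
  have h1 : {S : Set (X → X) | IsSubsemilattice S ∧ S.ncard = 2 ^ (Fintype.card X - 1)} =
      {S : Set (X → X) | ∃ t : X, S = Esl t} := by
    ext S
    simp only [Set.mem_setOf_eq]
    constructor
    · rintro ⟨hS, hcard⟩
      exact hard_direction S hS hcard hn1
    · rintro ⟨t, rfl⟩
      exact ⟨esl_subsemilattice t, esl_ncard t⟩
  refine ⟨h1, ?_⟩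
  rw [h1]
  have h2 : {S : Set (X → X) | ∃ t : X, S = Esl t} = Set.range (Esl : X → Set (X → X)) := by
    ext S
    simp only [Set.mem_setOf_eq, Set.mem_range]
    constructor
    · rintro ⟨t, rfl⟩; exact ⟨t, rfl⟩
    · rintro ⟨t, rfl⟩; exact ⟨t, rfl⟩
  rw [h2, Nat.card_range_of_injective (esl_injective hX), Nat.card_eq_fintype_card]
end
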